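/- In the quasi-consecutive pattern poset, suppose σ occurs precisely once in τ = a_1 a_2 ⋯ a_n and the unique occurrence involves a_1 but not a_2 and not a_n. Then the interval [σ, τ] is isomorphic to a product of two chains each of length at least 1; consequently μ(σ, τ) = 1 if [σ, τ] has rank 2, and μ(σ, τ) = 0 otherwise. -/

import Mathlib

/-!
Write the unique occurrence of `σ` in `τ` at positions `0, p + 1, …, p + k - 1`; since it
avoids the second and the last entry, `p ≥ 1` and `q := n - p - k ≥ 1`. If `σ ≤ ρ ≤ τ`, then
composing any occurrence of `ρ` in `τ` with an occurrence of `σ` in `ρ` yields the occurrence of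
`σ`, so `ρ` occurs in `τ` exactly once, namely at a window: position `0` together with a run of
consecutive positions containing `p + 1, …, p + k - 1`. Windows are compared by inclusion, so
`[σ, τ]` is the product of a chain of length `p` (growing the run to the left) and one of
length `q` (growing it to the right). Its Möbius function is the product of those of the two
chains, each `-1` for length `1` and `0` for larger lengths.
-/

open scoped Classical

/-- A finite permutation of arbitrary length: a length `n` together with a
permutation of `Fin n` (in one-line notation, the entry at position `i` is
its value at `i`). -/
abbrev QPerm : Type := Σ n : ℕ, Equiv.Perm (Fin n)

/-- `IsOcc a σ τ f` : the strictly monotone position map `f` selects an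
occurrence of the pattern `σ` in `τ` (order-isomorphically), where for every
gap index `j ≥ 1` (1-indexed) with `a j = false` the `j`-th and `(j+1)`-th
selected positions must be adjacent in `τ`. -/
def IsOcc (a : ℕ → Bool) {k n : ℕ} (σ : Equiv.Perm (Fin k)) (τ : Equiv.Perm (Fin n))
    (f : Fin k → Fin n) : Prop :=
  StrictMono f ∧ (∀ i j : Fin k, σ i < σ j ↔ τ (f i) < τ (f j)) ∧
    ∀ (i : ℕ) (h : i + 1 < k), a (i + 1) = false →
      (f ⟨i + 1, h⟩ : ℕ) = (f ⟨i, Nat.lt_of_succ_lt h⟩ : ℕ) + 1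

/-- `σ` occurs in `τ` as an `a`-vincular pattern. -/
def VOcc (a : ℕ → Bool) (σ τ : QPerm) : Prop :=
  ∃ f : Fin σ.1 → Fin τ.1, IsOcc a σ.2 τ.2 f

/-- Covering relation of the `a`-vincular pattern poset. -/
def VCov (a : ℕ → Bool) (σ τ : QPerm) : Prop :=
  σ.1 + 1 = τ.1 ∧ VOcc a σ τ

/-- The `a`-vincular pattern order: reflexive-transitive closure of covering. -/
def VLe (a : ℕ → Bool) (σ τ : QPerm) : Prop :=
  Relation.ReflTransGen (VCov a) σ τ

/-- Occurrence as an `A`-vincular pattern for a matrix `A` (rows and columns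
1-indexed via `A i j`); a pattern of length `k` uses row `k - 1`. -/
def MOcc (A : ℕ → ℕ → Bool) (σ τ : QPerm) : Prop :=
  VOcc (fun j => A (σ.1 - 1) j) σ τ

/-- Covering relation of the `A`-vincular pattern poset. -/
def MCov (A : ℕ → ℕ → Bool) (σ τ : QPerm) : Prop :=
  σ.1 + 1 = τ.1 ∧ MOcc A σ τ

/-- The `A`-vincular pattern order. -/
def MLe (A : ℕ → ℕ → Bool) (σ τ : QPerm) : Prop :=
  Relation.ReflTransGen (MCov A) σ τ

/-- The quasi-consecutive adjacency vector `a = (1,0,0,…)` (1-indexed). -/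
def qa : ℕ → Bool := fun j => decide (j = 1)

/-- Quasi-consecutive pattern occurrence. -/
def QOcc (σ τ : QPerm) : Prop := VOcc qa σ τ

/-- Covering in the quasi-consecutive pattern poset. -/
def QCov (σ τ : QPerm) : Prop := VCov qa σ τ

/-- The quasi-consecutive pattern poset order. -/
def QLe (σ τ : QPerm) : Prop := VLe qa σ τ

/-- All permutations of length at most `n`, as a finset. -/
def permsUpTo (n : ℕ) : Finset QPerm :=
  (Finset.range (n + 1)).sigma fun _ => Finset.univ

/-- Möbius function of the quasi-consecutive pattern poset, computed with
fuel (the fuel `τ.1` always suffices, since lengths strictly increase along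
the order). -/
noncomputable def qMuAux : ℕ → QPerm → QPerm → ℤ
  | 0, σ, τ => if σ = τ then 1 else 0
  | m + 1, σ, τ =>
      if σ = τ then 1
      else -∑ z ∈ (permsUpTo τ.1).filter fun z => QLe σ z ∧ QLe z τ ∧ z ≠ τ,
            qMuAux m σ z

/-- The Möbius function of the quasi-consecutive pattern poset. -/
noncomputable def qMu (σ τ : QPerm) : ℤ := qMuAux τ.1 σ τ

/-- The interval `[σ, τ]` in the quasi-consecutive pattern poset. -/
def QInterval (σ τ : QPerm) : Set QPerm := {ρ | QLe σ ρ ∧ QLe ρ τ}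

/-- The interval `[σ, τ]` is a chain. -/
def QChain (σ τ : QPerm) : Prop :=
  ∀ ρ₁ ρ₂ : QPerm, ρ₁ ∈ QInterval σ τ → ρ₂ ∈ QInterval σ τ → QLe ρ₁ ρ₂ ∨ QLe ρ₂ ρ₁

/-- The interval `[σ, τ]` is order-isomorphic to the product of a chain with
`p + 1` elements and a chain with `q + 1` elements (componentwise order). -/
def IsGridInterval (σ τ : QPerm) (p q : ℕ) : Prop :=
  ∃ e : QInterval σ τ ≃ Fin (p + 1) × Fin (q + 1),
    ∀ ρ₁ ρ₂ : QInterval σ τ, QLe ρ₁.1 ρ₂.1 ↔ e ρ₁ ≤ e ρ₂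

/-- The occurrence `f` involves position `i` (0-indexed) of the big permutation. -/
def Involves {k n : ℕ} (f : Fin k → Fin n) (i : ℕ) : Prop :=
  ∃ j : Fin k, (f j : ℕ) = i

/-- The occurrence `f` is consecutive: all selected positions are adjacent. -/
def ConsecOcc {k n : ℕ} (f : Fin k → Fin n) : Prop :=
  ∀ (i : ℕ) (h : i + 1 < k),
    (f ⟨i + 1, h⟩ : ℕ) = (f ⟨i, Nat.lt_of_succ_lt h⟩ : ℕ) + 1

/-- The first two entries of `τ` are not consecutive integers. -/
def NotConsecFirstTwo (τ : QPerm) : Prop :=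
  ∀ i j : Fin τ.1, (i : ℕ) = 0 → (j : ℕ) = 1 →
    (τ.2 i : ℕ) + 1 ≠ (τ.2 j : ℕ) ∧ (τ.2 j : ℕ) + 1 ≠ (τ.2 i : ℕ)

/-- `τ` is a monotone (increasing or decreasing) permutation. -/
def IsMonotonePerm (τ : QPerm) : Prop :=
  (∀ i j : Fin τ.1, i < j → τ.2 i < τ.2 j) ∨ (∀ i j : Fin τ.1, i < j → τ.2 j < τ.2 i)


namespace Equiv.Perm

theorem ext_of_lt_iff_lt {m : ℕ} {r₁ r₂ : Equiv.Perm (Fin m)}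
    (h : ∀ i j, r₁ i < r₁ j ↔ r₂ i < r₂ j) : r₁ = r₂ := by
  have hmono : StrictMono (r₂ ∘ r₁.symm) := fun a b hab => by
    simpa using (h (r₁.symm a) (r₁.symm b)).1 (by simpa using hab)
  ext i : 1
  simpa using (hmono.apply_eq (x := r₁ i)).symm

end Equiv.Perm

section Pattern

variable {α : Type*} [LinearOrder α] {m : ℕ}

/-- The permutation of `Fin m` in the same relative order as `v`. -/
def pattern (v : Fin m → α) : Equiv.Perm (Fin m) := (Tuple.sort v).symm

theorem pattern_lt_pattern_iff {v : Fin m → α} (hv : Function.Injective v) {i j : Fin m} :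
    pattern v i < pattern v j ↔ v i < v j := by
  have hsort : StrictMono (v ∘ Tuple.sort v) :=
    (Tuple.monotone_sort v).strictMono_of_injective (hv.comp (Tuple.sort v).injective)
  simpa [pattern] using
    (hsort.lt_iff_lt (a := (Tuple.sort v).symm i) (b := (Tuple.sort v).symm j)).symm

theorem eq_pattern {v : Fin m → α} (hv : Function.Injective v) {r : Equiv.Perm (Fin m)}
    (h : ∀ i j, r i < r j ↔ v i < v j) : r = pattern v :=
  Equiv.Perm.ext_of_lt_iff_lt fun i j => (h i j).trans (pattern_lt_pattern_iff hv).symm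

end Pattern

namespace IncidenceAlgebra

variable {𝕜 α : Type*} [AddCommGroup 𝕜] [One 𝕜] [DecidableEq α]

theorem mu_of_covBy [PartialOrder α] [LocallyFiniteOrder α] {a b : α} (h : a ⋖ b) :
    mu 𝕜 a b = -1 := by
  have hIco : Finset.Ico a b = {a} := Finset.coe_inj.1 (by simpa using h.Ico_eq)
  simp [mu_eq_neg_sum_Ico_of_ne h.ne, hIco]

theorem mu_eq_zero_of_lt_of_covBy [LinearOrder α] [LocallyFiniteOrder α] {a b c : α}
    (hab : a < b) (hbc : b ⋖ c) : mu 𝕜 a c = 0 := by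
  have hIco : Finset.Ico a c = Finset.Icc a b := by
    ext x
    simp only [Finset.mem_Ico, Finset.mem_Icc]
    exact and_congr_right fun _ => ⟨hbc.le_of_lt, fun hx => hx.trans_lt hbc.lt⟩
  rw [mu_eq_neg_sum_Ico_of_ne (hab.trans hbc.lt).ne, hIco, sum_Icc_mu_right, if_neg hab.ne,
    neg_zero]

theorem eulerChar_fin {p : ℕ} (hp : 1 ≤ p) :
    eulerChar ℤ (Fin (p + 1)) = if p = 1 then -1 else 0 := by
  rw [eulerChar, bot_eq_zero, Fin.top_eq_last]
  split_ifs with h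
  · subst h
    exact mu_of_covBy (Fin.covBy_iff.2 (Nat.covBy_iff_add_one_eq.2 rfl))
  · refine mu_eq_zero_of_lt_of_covBy (b := ⟨p - 1, by omega⟩) ?_ ?_
    · rw [Fin.lt_def, Fin.val_zero]
      exact Nat.sub_pos_of_lt (by omega)
    · rw [Fin.covBy_iff, Nat.covBy_iff_add_one_eq, Fin.val_last]
      exact Nat.sub_add_cancel hp

end IncidenceAlgebra

section Occurrence

theorem isOcc_id (a : ℕ → Bool) {k : ℕ} (σ : Equiv.Perm (Fin k)) : IsOcc a σ σ id :=
  ⟨strictMono_id, fun _ _ => Iff.rfl, fun _ _ _ => rfl⟩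

theorem isOcc_of_length_le_one (a : ℕ → Bool) {k n : ℕ} (hk : k ≤ 1) (σ : Equiv.Perm (Fin k))
    (τ : Equiv.Perm (Fin n)) (g : Fin k → Fin n) : IsOcc a σ τ g := by
  have hsub : ∀ i j : Fin k, i = j := fun i j => Fin.ext (by omega)
  refine ⟨fun i j hij => absurd (hsub i j) hij.ne, fun i j => ?_, fun i h _ => by omega⟩
  rw [hsub i j]
  simp

theorem qa_eq_false {i : ℕ} (hi : 1 ≤ i) : qa (i + 1) = false := by
  simp only [qa, decide_eq_false_iff_not]
  omega

variable {k l n : ℕ} {σ : Equiv.Perm (Fin k)} {ρ : Equiv.Perm (Fin l)} {τ : Equiv.Perm (Fin n)}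

/-- A gap `i ≥ 1` of `σ` lands on a gap `g i ≥ 1` of `ρ`, where adjacency is again required. -/
theorem IsOcc.comp {g : Fin k → Fin l} {c : Fin l → Fin n} (hg : IsOcc qa σ ρ g)
    (hc : IsOcc qa ρ τ c) : IsOcc qa σ τ (c ∘ g) := by
  refine ⟨hc.1.comp hg.1, fun i j => (hg.2.1 i j).trans (hc.2.1 _ _), fun i hi hqa => ?_⟩
  have hi1 : 1 ≤ i := by
    by_contra h
    obtain rfl : i = 0 := by omega
    simp [qa] at hqa
  have hgi : g ⟨0, by omega⟩ < g ⟨i, by omega⟩ := hg.1 (Fin.mk_lt_mk.2 (by omega))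
  have hgi1 : (g ⟨i + 1, hi⟩ : ℕ) = g ⟨i, by omega⟩ + 1 := hg.2.2 i hi hqa
  have hlt : (g ⟨i, by omega⟩ : ℕ) + 1 < l := hgi1 ▸ (g ⟨i + 1, hi⟩).2
  have hadj : g ⟨i + 1, hi⟩ = ⟨g ⟨i, by omega⟩ + 1, hlt⟩ := Fin.ext hgi1
  simp only [Function.comp_apply, hadj]
  exact hc.2.2 _ hlt (qa_eq_false (by rw [Fin.lt_def] at hgi; omega))

end Occurrence

namespace QLe

variable {σ τ : QPerm}

theorem exists_isOcc (h : QLe σ τ) : ∃ g : Fin σ.1 → Fin τ.1, IsOcc qa σ.2 τ.2 g := by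
  induction h with
  | refl => exact ⟨id, isOcc_id qa _⟩
  | tail _ hcov ih =>
    obtain ⟨g, hg⟩ := ih
    obtain ⟨c, hc⟩ := hcov.2
    exact ⟨c ∘ g, hg.comp hc⟩

theorem length_le (h : QLe σ τ) : σ.1 ≤ τ.1 := by
  induction h with
  | refl => rfl
  | tail _ hcov ih => exact ih.trans (hcov.1 ▸ Nat.le_succ _)

theorem length_lt_of_ne (h : QLe σ τ) (hne : σ ≠ τ) : σ.1 < τ.1 := by
  induction h with
  | refl => exact absurd rfl hne
  | @tail ρ _ hσρ hcov _ =>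
    have := hcov.1
    have : σ.1 ≤ ρ.1 := length_le hσρ
    omega

end QLe

section Mobius

theorem qMuAux_self (F : ℕ) (σ : QPerm) : qMuAux F σ σ = 1 := by
  cases F <;> simp [qMuAux]

theorem qMuAux_succ_of_length_le {F : ℕ} {σ τ : QPerm} (h : τ.1 ≤ F) :
    qMuAux (F + 1) σ τ = qMuAux F σ τ := by
  induction F generalizing τ with
  | zero =>
    by_cases hστ : σ = τ
    · simp [qMuAux, hστ]
    · simp only [qMuAux, hστ, if_false, neg_eq_zero]
      refine Finset.sum_eq_zero fun z hz => ?_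
      simp only [Finset.mem_filter] at hz
      have := hz.2.2.1.length_lt_of_ne hz.2.2.2
      omega
  | succ F ih =>
    by_cases hστ : σ = τ
    · simp [qMuAux_self, hστ]
    · simp only [qMuAux, hστ, if_false, neg_inj]
      refine Finset.sum_congr rfl fun z hz => ih ?_
      simp only [Finset.mem_filter] at hz
      have := hz.2.2.1.length_lt_of_ne hz.2.2.2
      omega

theorem qMuAux_of_length_le {F : ℕ} {σ τ : QPerm} (h : τ.1 ≤ F) : qMuAux F σ τ = qMu σ τ := by
  induction F, h using Nat.le_induction with
  | base => rfl
  | succ F hF ih => rw [qMuAux_succ_of_length_le hF, ih]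

theorem qMu_of_ne {σ τ : QPerm} (h : σ ≠ τ) :
    qMu σ τ = -∑ z ∈ (permsUpTo τ.1).filter (fun z => QLe σ z ∧ QLe z τ ∧ z ≠ τ), qMu σ z := by
  rw [← qMuAux_of_length_le (Nat.le_succ τ.1), qMuAux, if_neg h, neg_inj]
  refine Finset.sum_congr rfl fun z hz => qMuAux_of_length_le ?_
  simp only [Finset.mem_filter] at hz
  exact hz.2.2.1.length_le

variable {σ τ : QPerm} {P : Type*} [PartialOrder P] [LocallyFiniteOrder P] [DecidableEq P]

theorem qMu_eq_mu (e : QInterval σ τ ≃ P) (he : ∀ ρ₁ ρ₂, QLe ρ₁.1 ρ₂.1 ↔ e ρ₁ ≤ e ρ₂)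
    (ρ₁ ρ₂ : QInterval σ τ) : qMu ρ₁ ρ₂ = IncidenceAlgebra.mu ℤ (e ρ₁) (e ρ₂) := by
  induction hL : (ρ₂ : QPerm).1 using Nat.strong_induction_on generalizing ρ₂ with
  | _ L ih => ?_
  by_cases hρ : ρ₁ = ρ₂
  · subst hρ
    simp [qMu, qMuAux_self]
  have mem {z : QPerm} (h₁ : QLe ρ₁ z) (h₂ : QLe z ρ₂) : z ∈ QInterval σ τ :=
    ⟨ρ₁.2.1.trans h₁, h₂.trans ρ₂.2.2⟩
  rw [qMu_of_ne (Subtype.coe_injective.ne hρ),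
    IncidenceAlgebra.mu_eq_neg_sum_Ico_of_ne (e.injective.ne hρ), neg_inj]
  refine Finset.sum_bij' (fun z hz => e ⟨z, mem (Finset.mem_filter.1 hz).2.1
      (Finset.mem_filter.1 hz).2.2.1⟩) (fun x _ => (e.symm x).1) ?_ ?_ ?_ ?_ ?_
  · intro z hz
    obtain ⟨-, h₁, h₂, hne⟩ := Finset.mem_filter.1 hz
    refine Finset.mem_Ico.2 ⟨(he _ _).1 h₁, lt_of_le_of_ne ((he _ _).1 h₂) ?_⟩
    exact e.injective.ne fun h => hne (congrArg Subtype.val h)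
  · intro x hx
    obtain ⟨h₁, h₂⟩ := Finset.mem_Ico.1 hx
    have hle₁ : QLe ρ₁ (e.symm x) := (he _ _).2 (by simpa using h₁)
    have hle₂ : QLe (e.symm x) ρ₂ := (he _ _).2 (by simpa using h₂.le)
    refine Finset.mem_filter.2 ⟨?_, hle₁, hle₂, fun h => h₂.ne ?_⟩
    · exact Finset.mem_sigma.2 ⟨Finset.mem_range.2 (Nat.lt_succ_of_le hle₂.length_le),
        Finset.mem_univ _⟩
    · rw [← e.apply_symm_apply x]
      exact congrArg e (Subtype.ext h)
  · intro z hz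
    simp
  · intro x hx
    simp
  · intro z hz
    obtain ⟨-, -, h₂, hne⟩ := Finset.mem_filter.1 hz
    exact ih _ (hL ▸ h₂.length_lt_of_ne hne) ⟨z, _⟩ rfl

theorem qMu_eq_eulerChar [BoundedOrder P] (e : QInterval σ τ ≃ P)
    (he : ∀ ρ₁ ρ₂, QLe ρ₁.1 ρ₂.1 ↔ e ρ₁ ≤ e ρ₂) :
    qMu σ τ = IncidenceAlgebra.eulerChar ℤ P := by
  have hστ : QLe σ τ := (e.symm ⊥).2.1.trans (e.symm ⊥).2.2
  let σ' : QInterval σ τ := ⟨σ, Relation.ReflTransGen.refl, hστ⟩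
  let τ' : QInterval σ τ := ⟨τ, hστ, Relation.ReflTransGen.refl⟩
  have hbot : e σ' = ⊥ := le_bot_iff.1 (by simpa using (he σ' (e.symm ⊥)).1 (e.symm ⊥).2.1)
  have htop : e τ' = ⊤ := top_le_iff.1 (by simpa using (he (e.symm ⊤) τ').1 (e.symm ⊤).2.2)
  rw [IncidenceAlgebra.eulerChar, ← hbot, ← htop]
  exact qMu_eq_mu e he σ' τ'

end Mobius

theorem isGridInterval_of_range {σ τ : QPerm} {p q : ℕ} (F : Fin (p + 1) × Fin (q + 1) → QPerm)
    (hF : ∀ x y, QLe (F x) (F y) ↔ x ≤ y) (hrange : QInterval σ τ = Set.range F) :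
    IsGridInterval σ τ p q := by
  have hinj : F.Injective := fun x y h =>
    le_antisymm ((hF x y).1 (h ▸ .refl)) ((hF y x).1 (h ▸ .refl))
  refine ⟨(Equiv.setCongr hrange).trans (Equiv.ofInjective F hinj).symm, fun ρ₁ ρ₂ => ?_⟩
  rw [← hF, Equiv.trans_apply, Equiv.trans_apply, Equiv.apply_ofInjective_symm hinj,
    Equiv.apply_ofInjective_symm hinj]
  rfl

section Window

variable {n : ℕ}

/-- `τ` read as a word over `ℕ` and extended by the identity beyond position `n`, so that
windows can be defined without range proofs. -/
def natExtend (τ : Equiv.Perm (Fin n)) (x : ℕ) : ℕ := if h : x < n then τ ⟨x, h⟩ else x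

theorem natExtend_of_lt (τ : Equiv.Perm (Fin n)) {x : ℕ} (hx : x < n) :
    natExtend τ x = τ ⟨x, hx⟩ :=
  dif_pos hx

theorem natExtend_injective (τ : Equiv.Perm (Fin n)) : Function.Injective (natExtend τ) := by
  intro x y hxy
  unfold natExtend at hxy
  split_ifs at hxy with hx hy hy
  · exact congrArg Fin.val (τ.injective (Fin.ext hxy))
  · have := (τ ⟨x, hx⟩).2; omega
  · have := (τ ⟨y, hy⟩).2; omega
  · exact hxy

def windowPos (s i : ℕ) : ℕ := if i = 0 then 0 else s + i

theorem windowPos_injective (s : ℕ) : Function.Injective (windowPos s) := by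
  intro i j h
  unfold windowPos at h
  split_ifs at h <;> omega

theorem windowPos_strictMono (s : ℕ) : StrictMono (windowPos s) := by
  intro i j h
  unfold windowPos
  split_ifs <;> omega

theorem windowPos_windowPos (s t i : ℕ) : windowPos s (windowPos t i) = windowPos (s + t) i := by
  unfold windowPos
  split_ifs <;> omega

theorem windowPos_lt {s m N : ℕ} (h : s + m ≤ N) (i : Fin m) : windowPos s i < N := by
  have := i.2
  unfold windowPos
  split_ifs <;> omega

def window (τ : Equiv.Perm (Fin n)) (s m : ℕ) : QPerm :=
  ⟨m, pattern fun i : Fin m => natExtend τ (windowPos s i)⟩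

theorem natExtend_windowPos_injective (τ : Equiv.Perm (Fin n)) (s m : ℕ) :
    Function.Injective fun i : Fin m => natExtend τ (windowPos s i) :=
  (natExtend_injective τ).comp ((windowPos_injective s).comp Fin.val_injective)

theorem window_lt_window_iff (τ : Equiv.Perm (Fin n)) (s m : ℕ) {i j : Fin m} :
    (window τ s m).2 i < (window τ s m).2 j ↔
      natExtend τ (windowPos s i) < natExtend τ (windowPos s j) :=
  pattern_lt_pattern_iff (natExtend_windowPos_injective τ s m)

theorem isOcc_of_windowPos {m N t : ℕ} {ρ : Equiv.Perm (Fin m)} {π : Equiv.Perm (Fin N)}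
    {h : Fin m → Fin N} (hpos : ∀ i, (h i : ℕ) = windowPos t i)
    (hlt : ∀ i j, ρ i < ρ j ↔ π (h i) < π (h j)) : IsOcc qa ρ π h := by
  refine ⟨fun i j hij => ?_, hlt, fun i hi hqa => ?_⟩
  · rw [Fin.lt_def, hpos, hpos]
    exact windowPos_strictMono t hij
  · have hi0 : i ≠ 0 := by
      rintro rfl
      simp [qa] at hqa
    simp only [hpos, windowPos]
    split_ifs <;> omega

theorem IsOcc.eq_window {m s : ℕ} {ρ : Equiv.Perm (Fin m)} {τ : Equiv.Perm (Fin n)}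
    {h : Fin m → Fin n} (hh : IsOcc qa ρ τ h) (hpos : ∀ i, (h i : ℕ) = windowPos s i) :
    (⟨m, ρ⟩ : QPerm) = window τ s m := by
  refine congrArg (Sigma.mk m) (eq_pattern (natExtend_windowPos_injective τ s m)
    fun i j => (hh.2.1 i j).trans ?_)
  rw [← hpos, ← hpos, natExtend_of_lt τ (h i).2, natExtend_of_lt τ (h j).2]
  rfl

theorem window_zero_self (τ : Equiv.Perm (Fin n)) : window τ 0 n = ⟨n, τ⟩ :=
  ((isOcc_id qa τ).eq_window fun i => by simp [windowPos]).symm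

variable (τ : Equiv.Perm (Fin n))

theorem isOcc_window {s m : ℕ} (h : s + m ≤ n) :
    IsOcc qa (window τ s m).2 τ (fun i : Fin m => ⟨windowPos s i, windowPos_lt h i⟩) := by
  refine isOcc_of_windowPos (fun _ => rfl) fun i j => (window_lt_window_iff τ s m).trans ?_
  rw [natExtend_of_lt τ (windowPos_lt h i), natExtend_of_lt τ (windowPos_lt h j)]
  rfl

theorem isOcc_window_window {s t m m' : ℕ} (h : t + m ≤ m') :
    IsOcc qa (window τ (s + t) m).2 (window τ s m').2
      (fun i : Fin m => ⟨windowPos t i, windowPos_lt h i⟩) := by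
  refine isOcc_of_windowPos (fun _ => rfl) fun i j =>
    (window_lt_window_iff τ (s + t) m).trans ((window_lt_window_iff τ s m').trans ?_).symm
  simp only [windowPos_windowPos]

theorem qCov_window_window {s t m : ℕ} (ht : t ≤ 1) :
    QCov (window τ (s + t) m) (window τ s (m + 1)) :=
  ⟨rfl, _, isOcc_window_window τ (by omega)⟩

theorem window_le_window {s m s' m' : ℕ} (hs : s' ≤ s) (hm : s + m ≤ s' + m') :
    QLe (window τ s m) (window τ s' m') := by
  obtain ⟨d, rfl⟩ := Nat.exists_eq_add_of_le hs
  obtain ⟨e, rfl⟩ : ∃ e, m' = m + d + e := ⟨m' - m - d, by omega⟩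
  have hstart : ∀ d m, QLe (window τ (s' + d) m) (window τ s' (m + d)) := by
    intro d
    induction d with
    | zero => intro m; exact Relation.ReflTransGen.refl
    | succ d ih =>
      intro m
      rw [← add_assoc, show m + (d + 1) = m + 1 + d by omega]
      exact .head (qCov_window_window τ le_rfl) (ih (m + 1))
  have hlength : ∀ e m, QLe (window τ s' m) (window τ s' (m + e)) := by
    intro e
    induction e with
    | zero => intro m; exact Relation.ReflTransGen.refl
    | succ e ih =>
      intro m
      exact (ih m).tail (qCov_window_window (t := 0) τ (Nat.zero_le 1))
  exact (hstart d m).trans (hlength e (m + d))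

end Window

theorem IsOcc.exists_windowPos {k n : ℕ} {σ : Equiv.Perm (Fin k)} {τ : Equiv.Perm (Fin n)}
    {g : Fin k → Fin n} (hg : IsOcc qa σ τ g) (h0 : Involves g 0) :
    ∃ s, ∀ i, (g i : ℕ) = windowPos s i := by
  obtain ⟨j, hj⟩ := h0
  have hg0 (i : Fin k) (hi : (i : ℕ) = 0) : (g i : ℕ) = 0 :=
    Nat.le_zero.1 (hj ▸ hg.1.monotone (Fin.le_def.2 (hi ▸ Nat.zero_le _)))
  by_cases hk : k ≤ 1
  · exact ⟨0, fun i => by rw [hg0 i (by omega), windowPos, if_pos (by omega)]⟩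
  have hg1 : (g ⟨0, by omega⟩ : ℕ) < g ⟨1, by omega⟩ := hg.1 (Fin.mk_lt_mk.2 zero_lt_one)
  rw [hg0 _ rfl] at hg1
  have hsucc (i : ℕ) (hi : i + 1 < k) : (g ⟨i + 1, hi⟩ : ℕ) = g ⟨1, by omega⟩ + i := by
    induction i with
    | zero => rfl
    | succ i ih => rw [hg.2.2 (i + 1) hi (qa_eq_false (by omega)), ih (by omega), add_assoc]
  refine ⟨g ⟨1, by omega⟩ - 1, fun ⟨i, hi⟩ => ?_⟩
  rcases i with _ | i
  · rw [hg0 _ rfl, windowPos, if_pos rfl]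
  · show (g ⟨i + 1, hi⟩ : ℕ) = windowPos _ (i + 1)
    rw [hsucc i hi, windowPos, if_neg (Nat.succ_ne_zero i)]
    omega

section UniqueOccurrence

variable {k n : ℕ} {σ : Equiv.Perm (Fin k)} {τ : Equiv.Perm (Fin n)} {f : Fin k → Fin n}

/-- Composing with an occurrence of `σ` in `ρ` turns every occurrence of `ρ` into the unique
occurrence `f` of `σ`, which pins down its second position. -/
theorem exists_windowPos_of_le (hk : 2 ≤ k) (hf0 : Involves f 0)
    (huniq : ∀ g, IsOcc qa σ τ g → g = f) {m : ℕ} {ρ : Equiv.Perm (Fin m)}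
    (hσρ : QLe ⟨k, σ⟩ ⟨m, ρ⟩) :
    ∃ s, ∀ h, IsOcc qa ρ τ h → ∀ i, (h i : ℕ) = windowPos s i := by
  obtain ⟨g, hg⟩ : ∃ g : Fin k → Fin m, IsOcc qa σ ρ g := hσρ.exists_isOcc
  let j : Fin k := ⟨1, hk⟩
  have hg01 : g ⟨0, by omega⟩ < g j := hg.1 (Fin.mk_lt_mk.2 zero_lt_one)
  have hgj : (g j : ℕ) ≠ 0 := Nat.pos_iff_ne_zero.1 (Nat.zero_lt_of_lt hg01)
  refine ⟨f j - g j, fun h hh i => ?_⟩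
  have hcomp : h ∘ g = f := huniq _ (hg.comp hh)
  obtain ⟨i₀, hi₀⟩ := hf0
  obtain ⟨s, hs⟩ := hh.exists_windowPos ⟨g i₀, by rw [← hi₀, ← hcomp]; rfl⟩
  have hfj : (f j : ℕ) = s + g j := by
    rw [← hcomp, Function.comp_apply, hs, windowPos, if_neg hgj]
  rw [hs, show s = f j - g j by omega]

theorem le_of_window_le_window (hk : 2 ≤ k) (hf0 : Involves f 0)
    (huniq : ∀ g, IsOcc qa σ τ g → g = f) {s m s' m' : ℕ} (hσ : QLe ⟨k, σ⟩ (window τ s m))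
    (hsm : s + m ≤ n) (hsm' : s' + m' ≤ n) (hle : QLe (window τ s m) (window τ s' m')) :
    s' ≤ s ∧ s + m ≤ s' + m' := by
  obtain ⟨c, hc⟩ : ∃ c : Fin m → Fin m', IsOcc qa (window τ s m).2 (window τ s' m').2 c :=
    hle.exists_isOcc
  have hm : 2 ≤ m := hk.trans hσ.length_le
  obtain ⟨t, ht⟩ := exists_windowPos_of_le hk hf0 huniq hσ
  have hpos (i : Fin m) : windowPos s i = windowPos s' (c i) :=
    (ht _ (isOcc_window τ hsm) i).trans (ht _ (hc.comp (isOcc_window τ hsm')) i).symm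
  have hc1 : (c ⟨0, by omega⟩ : ℕ) < c ⟨1, by omega⟩ := hc.1 (Fin.mk_lt_mk.2 zero_lt_one)
  have hcm : c ⟨1, by omega⟩ ≤ c ⟨m - 1, by omega⟩ := hc.1.monotone (Fin.mk_le_mk.2 (by omega))
  have hpos1 := hpos ⟨1, by omega⟩
  have hposm := hpos ⟨m - 1, by omega⟩
  have hlt := (c ⟨m - 1, by omega⟩).2
  simp only [windowPos, Fin.le_def] at hpos1 hposm hcm hlt
  split_ifs at hpos1 hposm <;> omega

theorem exists_window_of_mem_interval (hk : 2 ≤ k) (hf0 : Involves f 0)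
    (huniq : ∀ g, IsOcc qa σ τ g → g = f) {ρ : QPerm} (hρ : ρ ∈ QInterval ⟨k, σ⟩ ⟨n, τ⟩) :
    ∃ s m, s + m ≤ n ∧ ρ = window τ s m := by
  obtain ⟨m, ρ⟩ := ρ
  obtain ⟨h, hh⟩ : ∃ h : Fin m → Fin n, IsOcc qa ρ τ h := hρ.2.exists_isOcc
  obtain ⟨s, hs⟩ := exists_windowPos_of_le hk hf0 huniq hρ.1
  have hm : 2 ≤ m := hk.trans hρ.1.length_le
  have hlast := hs h hh ⟨m - 1, by omega⟩
  have hlt := (h ⟨m - 1, by omega⟩).2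
  rw [windowPos, if_neg (by simp only; omega)] at hlast
  exact ⟨s, m, by simp only at hlast; omega, hh.eq_window (hs h hh)⟩

/-- The grid point `(a, b)` is the window extended by `a` positions to the left and `b` to the
right of the occurrence of `σ`. -/
theorem isGridInterval_of_unique (hk : 2 ≤ k) (hf0 : Involves f 0)
    (huniq : ∀ g, IsOcc qa σ τ g → g = f) {p q : ℕ} (hσ : (⟨k, σ⟩ : QPerm) = window τ p k)
    (hn : n = p + k + q) : IsGridInterval ⟨k, σ⟩ ⟨n, τ⟩ p q := by
  have hle (x y : Fin (p + 1) × Fin (q + 1)) :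
      QLe (window τ (p - x.1) (k + x.1 + x.2)) (window τ (p - y.1) (k + y.1 + y.2)) ↔ x ≤ y := by
    have := x.1.2; have := x.2.2; have := y.1.2; have := y.2.2
    rw [Prod.le_def, Fin.le_def, Fin.le_def]
    refine ⟨fun h => ?_, fun h => window_le_window τ (by omega) (by omega)⟩
    have hσx : QLe ⟨k, σ⟩ (window τ (p - x.1) (k + x.1 + x.2)) :=
      hσ ▸ window_le_window τ (by omega) (by omega)
    have := le_of_window_le_window hk hf0 huniq hσx (by omega) (by omega) h
    omega
  refine isGridInterval_of_range _ hle (Set.ext fun ρ => ⟨fun hρ => ?_, ?_⟩)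
  · obtain ⟨s, m, hsm, rfl⟩ := exists_window_of_mem_interval hk hf0 huniq hρ
    have := le_of_window_le_window hk hf0 huniq (hσ ▸ .refl) (by omega) hsm (hσ ▸ hρ.1)
    refine ⟨(⟨p - s, by omega⟩, ⟨s + m - p - k, by omega⟩), ?_⟩
    simp only
    congr 1 <;> omega
  · rintro ⟨⟨a, b⟩, rfl⟩
    have := a.2; have := b.2
    rw [hσ, ← window_zero_self τ]
    exact ⟨window_le_window τ (by omega) (by omega), window_le_window τ (by omega) (by omega)⟩

theorem exists_windowPos_of_unique (huniq : ∀ g, IsOcc qa σ τ g → g = f) (hf : IsOcc qa σ τ f)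
    (h0 : Involves f 0) (h1 : ¬ Involves f 1) (hn : ¬ Involves f (n - 1)) :
    2 ≤ k ∧ ∃ p q, 1 ≤ p ∧ 1 ≤ q ∧ n = p + k + q ∧ ∀ i, (f i : ℕ) = windowPos p i := by
  obtain ⟨j₀, hj₀⟩ := h0
  have hk : 2 ≤ k := by
    by_contra hk
    have hn1 : n - 1 < n := by have := (f j₀).2; omega
    have hconst := huniq _ (isOcc_of_length_le_one qa (by omega) σ τ fun _ => ⟨n - 1, hn1⟩)
    exact hn ⟨j₀, by rw [← hconst]⟩
  obtain ⟨p, hp⟩ := hf.exists_windowPos ⟨j₀, hj₀⟩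
  refine ⟨hk, p, n - p - k, ?_⟩
  have hsecond := hp ⟨1, hk⟩
  have hlast := hp ⟨k - 1, by omega⟩
  have hne₁ : (f ⟨1, hk⟩ : ℕ) ≠ 1 := fun h => h1 ⟨_, h⟩
  have hne₂ : (f ⟨k - 1, by omega⟩ : ℕ) ≠ n - 1 := fun h => hn ⟨_, h⟩
  have hlt := (f ⟨k - 1, by omega⟩).2
  simp only [windowPos] at hsecond hlast
  rw [if_neg one_ne_zero] at hsecond
  rw [if_neg (by omega)] at hlast
  exact ⟨by omega, by omega, by omega, hp⟩

end UniqueOccurrence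

theorem unique_occurrence_first_entry_general (σ τ : QPerm)
    (f : Fin σ.1 → Fin τ.1) (hf : IsOcc qa σ.2 τ.2 f)
    (huniq : ∀ g : Fin σ.1 → Fin τ.1, IsOcc qa σ.2 τ.2 g → g = f)
    (h0 : Involves f 0) (h1 : ¬ Involves f 1) (hn : ¬ Involves f (τ.1 - 1)) :
    (∃ p q : ℕ, 1 ≤ p ∧ 1 ≤ q ∧ IsGridInterval σ τ p q) ∧
      (τ.1 - σ.1 = 2 → qMu σ τ = 1) ∧ (τ.1 - σ.1 ≠ 2 → qMu σ τ = 0) := by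
  obtain ⟨k, σ⟩ := σ
  obtain ⟨n, τ⟩ := τ
  obtain ⟨hk, p, q, hp, hq, hnpq, hfp⟩ :=
    exists_windowPos_of_unique (σ := σ) (τ := τ) huniq hf h0 h1 hn
  obtain ⟨e, he⟩ := isGridInterval_of_unique hk h0 huniq (hf.eq_window hfp) hnpq
  have hμ : qMu ⟨k, σ⟩ ⟨n, τ⟩ = (if p = 1 then -1 else 0) * (if q = 1 then -1 else 0) := by
    rw [qMu_eq_eulerChar e he, IncidenceAlgebra.eulerChar_prod,
      IncidenceAlgebra.eulerChar_fin hp, IncidenceAlgebra.eulerChar_fin hq]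
  refine ⟨⟨p, q, hp, hq, e, he⟩, fun (hrank : n - k = 2) => ?_,
    fun (hrank : n - k ≠ 2) => ?_⟩ <;> rw [hμ] <;> split_ifs <;> omega

/-- If `σ` occurs precisely once in `τ = a₁a₂⋯aₙ` and the occurrence
involves `a₁` but neither `a₂` nor `aₙ`, then `[σ, τ]` is a grid (product
of two chains of length at least 1); hence `μ(σ,τ) = 1` if the rank is `2`
and `μ(σ,τ) = 0` otherwise. -/
theorem unique_occurrence_first_entry (σ τ : QPerm) (hle : QLe σ τ)
    (f : Fin σ.1 → Fin τ.1) (hf : IsOcc qa σ.2 τ.2 f)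
    (huniq : ∀ g : Fin σ.1 → Fin τ.1, IsOcc qa σ.2 τ.2 g → g = f)
    (h0 : Involves f 0) (h1 : ¬ Involves f 1) (hn : ¬ Involves f (τ.1 - 1)) :
    (∃ p q : ℕ, 1 ≤ p ∧ 1 ≤ q ∧ IsGridInterval σ τ p q) ∧
      (τ.1 - σ.1 = 2 → qMu σ τ = 1) ∧ (τ.1 - σ.1 ≠ 2 → qMu σ τ = 0) :=
  unique_occurrence_first_entry_general σ τ f hf huniq h0 h1 hn
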